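/- arXiv:2311.09045 — 3 statements merged into one kernel-verified Lean document; each statement's English description precedes it below -/
import Mathlib

section
/- For nonnegative integers a and b and a real (or rational) variable z avoiding poles, the infinite sum ∑_{t=a}^{∞} (b+t)_{2t}/(z+t)_{2t+2} converges and equals (b+a)_{2a} / ((z+b)·(z+a-1)_{2a}·(z-b-1)). In particular, since (b+t)_{2t} = 0 for t > b, the sum is actually the finite sum ∑_{t=a}^{b}. -/
/-- Falling factorial `(a)_k = a(a-1)⋯(a-k+1)`. -/
noncomputable def ff {R : Type*} [CommRing R] (a : R) (k : ℕ) : R :=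
  ∏ j ∈ Finset.range k, (a - (j : R))

/-!
The sum telescopes. With `P t = (b+t)_{2t} / (z+t-1)_{2t}`, peeling the outer factors off
`(b+t+1)_{2t+2}` and `(z+t)_{2t+2}` gives
`(b+t)_{2t} / (z+t)_{2t+2} · (z+b)(z-b-1) = P t - P (t+1)`,
so the sum over `a ≤ t ≤ b` is `(P a - P (b+1)) / ((z+b)(z-b-1))`. For natural `b` the numerator
`(b+t)_{2t}` vanishes once `t > b`, which kills `P (b+1)` and every term of the series past `b`.
-/

open Finset

lemma ff_add_one_add_two {R : Type*} [CommRing R] (x : R) (k : ℕ) :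
    ff (x + 1) (k + 2) = (x + 1) * ff x k * (x - k) := by
  simp only [ff, prod_range_succ _ (k + 1), prod_range_succ']
  push_cast
  simp only [add_sub_add_right_eq_sub]
  ring

lemma ff_natCast_add_natCast_two_mul {R : Type*} [CommRing R] {n t : ℕ} (h : n < t) :
    ff ((n : R) + t) (2 * t) = 0 :=
  prod_eq_zero (mem_range.2 (by omega : n + t < 2 * t)) (by push_cast; ring)

lemma hasSum_nat_add_of_eq_zero {M : Type*} [AddCommMonoid M] [TopologicalSpace M]
    {f : ℕ → M} (a : ℕ) {b : ℕ} (hf : ∀ t, b < t → f t = 0) :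
    HasSum (fun t => f (a + t)) (∑ t ∈ Icc a b, f t) := by
  rw [← Ico_add_one_right_eq_Icc, sum_Ico_eq_sum_range]
  exact hasSum_sum_of_ne_finset_zero fun t ht => hf _ (by simp at ht; omega)

section Telescoping

variable {K : Type*} [Field K]

noncomputable def summand (b z : K) (t : ℕ) : K := ff (b + t) (2 * t) / ff (z + t) (2 * t + 2)

noncomputable def potential (b z : K) (t : ℕ) : K := ff (b + t) (2 * t) / ff (z + t - 1) (2 * t)

lemma ff_add_two_mul_add_two (z : K) (t : ℕ) :
    ff (z + t) (2 * t + 2) = (z + t) * ff (z + t - 1) (2 * t) * (z - t - 1) := by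
  have := ff_add_one_add_two (z + t - 1) (2 * t)
  rw [sub_add_cancel] at this
  rw [this]
  push_cast
  ring

lemma summand_mul_eq_potential_sub (b z : K) {t : ℕ} (h : ff (z + t) (2 * t + 2) ≠ 0) :
    summand b z t * ((z + b) * (z - b - 1)) = potential b z t - potential b z (t + 1) := by
  have hnum : ff (b + (t + 1 : ℕ)) (2 * (t + 1)) =
      (b + t + 1) * ff (b + t) (2 * t) * (b - t) := by
    rw [Nat.cast_succ, ← add_assoc, mul_add_one, ff_add_one_add_two]
    push_cast
    ring
  have hden : ff (z + (t + 1 : ℕ) - 1) (2 * (t + 1)) = ff (z + t) (2 * t + 2) := by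
    push_cast
    ring_nf
  rw [ff_add_two_mul_add_two] at h
  obtain ⟨⟨hzt, hff⟩, hzt'⟩ := mul_ne_zero_iff.1 h |>.imp_left mul_ne_zero_iff.1
  simp only [summand, potential, hnum, hden, ff_add_two_mul_add_two]
  field_simp
  -- (z+t)(z-t-1) - (b+t+1)(b-t) = (z+b)(z-b-1)
  ring

lemma sum_Icc_summand_mul (b z : K) {a n : ℕ} (han : a ≤ n)
    (hden : ∀ t, a ≤ t → t ≤ n → ff (z + t) (2 * t + 2) ≠ 0) :
    (∑ t ∈ Icc a n, summand b z t) * ((z + b) * (z - b - 1)) =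
      potential b z a - potential b z (n + 1) := by
  rw [sum_mul, sum_congr rfl fun t ht => summand_mul_eq_potential_sub b z
    (hden t (mem_Icc.1 ht).1 (mem_Icc.1 ht).2), ← neg_sub, ← sum_Icc_sub han]
  simp

lemma summand_natCast_of_lt (z : K) {b t : ℕ} (h : b < t) : summand (b : K) z t = 0 := by
  rw [summand, ff_natCast_add_natCast_two_mul h, zero_div]

lemma sum_Icc_summand_natCast (a b : ℕ) (z : K)
    (hden : ∀ t, a ≤ t → t ≤ b → ff (z + t) (2 * t + 2) ≠ 0) :
    ∑ t ∈ Icc a b, summand (b : K) z t =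
      ff ((b : K) + a) (2 * a) / ((z + b) * ff (z + a - 1) (2 * a) * (z - b - 1)) := by
  rcases le_or_gt a b with hab | hba
  · have hc : (z + b) * (z - b - 1) ≠ 0 := by
      have := hden b hab le_rfl
      rw [ff_add_two_mul_add_two] at this
      exact mul_ne_zero (left_ne_zero_of_mul (left_ne_zero_of_mul this))
        (right_ne_zero_of_mul this)
    have hb1 : potential (b : K) z (b + 1) = 0 := by
      rw [potential, ff_natCast_add_natCast_two_mul (Nat.lt_succ_self b), zero_div]
    rw [eq_div_iff hc |>.2 (sum_Icc_summand_mul (b : K) z hab hden), hb1, sub_zero,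
      potential, div_div]
    ring
  · rw [Icc_eq_empty_of_lt hba, sum_empty, ff_natCast_add_natCast_two_mul hba, zero_div]

end Telescoping

theorem stmt2_general (a b : ℕ) (z : ℝ)
    (hden : ∀ t : ℕ, a ≤ t → t ≤ b → ff (z + t) (2*t+2) ≠ 0) :
    HasSum (fun t : ℕ => ff ((b:ℝ) + (a + t)) (2*(a+t)) / ff (z + (a + t)) (2*(a+t)+2))
        (ff ((b:ℝ) + a) (2*a) / ((z + b) * ff (z + a - 1) (2*a) * (z - b - 1))) ∧
      ∑ t ∈ Finset.Icc a b, ff ((b:ℝ) + t) (2*t) / ff (z + t) (2*t+2) =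
        ff ((b:ℝ) + a) (2*a) / ((z + b) * ff (z + a - 1) (2*a) * (z - b - 1)) := by
  have hsum := sum_Icc_summand_natCast a b z hden
  have hseries := hasSum_nat_add_of_eq_zero a fun t (ht : b < t) => summand_natCast_of_lt z ht
  rw [hsum] at hseries
  exact ⟨by simpa only [summand, Nat.cast_add] using hseries, hsum⟩

theorem stmt2 (a b : ℕ) (z : ℝ)
    (hden : ∀ t : ℕ, a ≤ t → t ≤ b → ff (z + t) (2*t+2) ≠ 0)
    (h1 : z + b ≠ 0) (h2 : z - b - 1 ≠ 0) (h3 : ff (z + a - 1) (2*a) ≠ 0) :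
    HasSum (fun t : ℕ => ff ((b:ℝ) + (a + t)) (2*(a+t)) / ff (z + (a + t)) (2*(a+t)+2))
        (ff ((b:ℝ) + a) (2*a) / ((z + b) * ff (z + a - 1) (2*a) * (z - b - 1))) ∧
      ∑ t ∈ Finset.Icc a b, ff ((b:ℝ) + t) (2*t) / ff (z + t) (2*t+2) =
        ff ((b:ℝ) + a) (2*a) / ((z + b) * ff (z + a - 1) (2*a) * (z - b - 1)) :=
  stmt2_general a b z hden
end

section
/- Define, for nonnegative integers i, m, the polynomial 2·F~_i^m(x,y) = ∑_{u=0}^{m} binom(m,u)·(-1)^u·m!/((m+i+u+1/2)_{m+1}) · (x+m+i+u)_{2m+2i+2u+1} · (y+m+i)_{m-u} · (y-i-u-1)_{m-u}. Then the recurrence ((2i-1)/(2m+2))·2F~_{i-1}^{m+1}(x,y) = (x² + y² − (i+m+1)² − i²)·2F~_i^m(x,y) − 2·2F~_{i+1}^m(x,y) holds for all integers i ≥ 1 and m ≥ 0. -/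
/-- `f2 i m x y = 2·F̃ᵢᵐ(x,y)`, twice the deformed polynomial of Feigin–Wang–Yoshinaga. -/
noncomputable def f2 (i m : ℕ) (x y : ℚ) : ℚ :=
  ∑ u ∈ Finset.range (m+1),
    (m.choose u : ℚ) * (-1)^u * (m.factorial : ℚ) / ff ((m:ℚ) + i + u + 1/2) (m+1)
      * ff (x + m + i + u) (2*m+2*i+2*u+1) * ff (y + m + i) (m-u) * ff (y - i - u - 1) (m-u)

/-- `Ft i m x y = F̃ᵢᵐ(x,y)`. -/
noncomputable def Ft (i m : ℕ) (x y : ℚ) : ℚ := f2 i m x y / 2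


/-!
With `X n x = ff (x + n) (2n+1) = x ∏_{s ≤ n} (x² - s²)` and
`Y a b y = ff (y + b) (b - a) * ff (y - a - 1) (b - a) = ∏_{a < s ≤ b} (y² - s²)`, the `u`-th
summand of `f2 i m` is `c(m, i+u, u) · X (m+i+u) · Y (i+u) (m+i)`. Since
`x² · X n = X (n+1) + (n+1)² · X n`, both sides of the recurrence become combinations of
`X (m+i), …, X (2m+i+1)`, and comparing coefficients reduces, after peeling a factor
`y² - s²` off either end of the `Y`'s, to a rational identity between the `c`'s.
-/

open Finset

theorem Finset.sum_range_succ_eq_of_shift {M : Type*} [AddCommMonoid M] {f g h : ℕ → M}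
    {n : ℕ} (h₀ : f 0 = g 0) (hsucc : ∀ u < n, f (u + 1) = g (u + 1) + h u) (hn : g n = 0) :
    ∑ v ∈ range (n + 1), f v = ∑ u ∈ range n, (g u + h u) := by
  rw [sum_range_succ', sum_congr rfl fun u hu => hsucc u (mem_range.1 hu), sum_add_distrib, h₀,
    add_right_comm, ← sum_range_succ' g, sum_range_succ, hn, add_zero, sum_add_distrib]

section FallingFactorial

variable {R : Type*} [CommRing R]

@[simp] theorem ff_zero (a : R) : ff a 0 = 1 := prod_range_zero _

theorem ff_succ_right (a : R) (k : ℕ) : ff a (k + 1) = ff a k * (a - k) := prod_range_succ _ _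

theorem ff_succ_left (a : R) (k : ℕ) : ff a (k + 1) = a * ff (a - 1) k := by
  rw [ff, prod_range_succ', Nat.cast_zero, sub_zero, mul_comm]
  congr 1
  exact prod_congr rfl fun j _ => by push_cast; ring

noncomputable def xFactor (x : R) (n : ℕ) : R := ff (x + n) (2 * n + 1)

theorem xFactor_succ (x : R) (n : ℕ) :
    xFactor x (n + 1) = (x ^ 2 - ((n : R) + 1) ^ 2) * xFactor x n := by
  rw [xFactor, xFactor, show 2 * (n + 1) + 1 = 2 * n + 1 + 1 + 1 by ring, ff_succ_left,
    ff_succ_right]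
  push_cast
  ring_nf

noncomputable def yFactor (y : R) (a b : ℕ) : R := ff (y + b) (b - a) * ff (y - a - 1) (b - a)

@[simp] theorem yFactor_self (y : R) (a : ℕ) : yFactor y a a = 1 := by
  simp [yFactor]

theorem yFactor_of_lt (y : R) {a b : ℕ} (h : a < b) :
    yFactor y a b = (y ^ 2 - ((a : R) + 1) ^ 2) * yFactor y (a + 1) b := by
  rw [yFactor, yFactor, show b - a = b - (a + 1) + 1 by omega, ff_succ_right, ff_succ_left,
    Nat.cast_sub h]
  push_cast
  ring_nf

theorem yFactor_succ_right (y : R) {a b : ℕ} (h : a ≤ b) :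
    yFactor y a (b + 1) = (y ^ 2 - ((b : R) + 1) ^ 2) * yFactor y a b := by
  rw [yFactor, yFactor, show b + 1 - a = b - a + 1 by omega, ff_succ_left (y + _),
    ff_succ_right (y - _ - 1), Nat.cast_sub h]
  push_cast
  ring_nf

end FallingFactorial

noncomputable def halfDenom (m a : ℕ) : ℚ := ff ((m : ℚ) + a + 1 / 2) (m + 1)

theorem halfDenom_ne_zero (m a : ℕ) : halfDenom m a ≠ 0 := by
  unfold halfDenom ff
  refine prod_ne_zero_iff.2 fun j _ h => ?_
  have : (2 * (m + a) + 1 : ℚ) = 2 * j := by linarith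
  have : 2 * (m + a) + 1 = 2 * j := by exact_mod_cast this
  omega

theorem halfDenom_succ_left (m a : ℕ) :
    halfDenom (m + 1) a = halfDenom m (a + 1) * ((a : ℚ) + 1 / 2) := by
  rw [halfDenom, halfDenom, ff_succ_right]
  push_cast
  ring_nf

theorem halfDenom_succ_right (m a : ℕ) :
    halfDenom m (a + 1) * ((a : ℚ) + 1 / 2) = ((m : ℚ) + a + 3 / 2) * halfDenom m a := by
  rw [halfDenom, halfDenom, ff_succ_left, ff_succ_right]
  push_cast
  ring_nf

noncomputable def coeff (m a u : ℕ) : ℚ := m.choose u * (-1) ^ u * m.factorial / halfDenom m a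

theorem coeff_succ_self (m a : ℕ) : coeff m a (m + 1) = 0 := by
  simp [coeff, Nat.choose_succ_self]

theorem f2_eq_sum (i m : ℕ) (x y : ℚ) :
    f2 i m x y = ∑ u ∈ range (m + 1),
      coeff m (i + u) u * xFactor x (m + i + u) * yFactor y (i + u) (m + i) := by
  refine sum_congr rfl fun u hu => ?_
  rw [coeff, halfDenom, xFactor, yFactor, show m + i - (i + u) = m - u by omega,
    show 2 * (m + i + u) + 1 = 2 * m + 2 * i + 2 * u + 1 by ring]
  push_cast
  ring_nf

theorem coeff_zero_identity (m k : ℕ) :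
    (2 * (k : ℚ) + 1) / (2 * m + 2) * coeff (m + 1) k 0 = coeff m (k + 1) 0 := by
  have := halfDenom_ne_zero m (k + 1)
  rw [coeff, coeff, halfDenom_succ_left, Nat.factorial_succ, Nat.choose_zero_right,
    Nat.choose_zero_right]
  push_cast
  field_simp

theorem coeff_succ_identity (m k u : ℕ) (hu : u ≤ m) (y : ℚ) :
    (2 * (k : ℚ) + 1) / (2 * m + 2) * coeff (m + 1) (k + u + 1) (u + 1)
        * (y ^ 2 - ((k : ℚ) + u + 2) ^ 2)
      = coeff m (k + u + 2) (u + 1)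
          * (y ^ 2 + ((m : ℚ) + k + u + 3) ^ 2 - ((m : ℚ) + k + 2) ^ 2 - ((k : ℚ) + 1) ^ 2)
        + coeff m (k + u + 1) u * (y ^ 2 - ((k : ℚ) + u + 2) ^ 2)
        - 2 * coeff m (k + u + 2) u * (y ^ 2 - ((m : ℚ) + k + 2) ^ 2) := by
  set a := k + u + 1
  have hD := halfDenom_ne_zero m (a + 1)
  have hshift :
      halfDenom m a = halfDenom m (a + 1) * ((a : ℚ) + 1 / 2) / ((m : ℚ) + a + 3 / 2) := by
    rw [eq_div_iff (by positivity), halfDenom_succ_right, mul_comm]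
  have hchoose :
      ((m + 1).choose (u + 1) : ℚ) = ((m : ℚ) + 1) * m.choose u / ((u : ℚ) + 1) := by
    rw [eq_div_iff (by positivity)]
    exact_mod_cast (Nat.add_one_mul_choose_eq m u).symm
  have hnext : (m.choose (u + 1) : ℚ) = m.choose u * ((m : ℚ) - u) / ((u : ℚ) + 1) := by
    rw [eq_div_iff (by positivity), ← Nat.cast_sub hu]
    exact_mod_cast Nat.choose_succ_right_eq m u
  rw [show k + u + 2 = a + 1 from rfl, coeff, coeff, coeff, coeff, halfDenom_succ_left, hshift,
    Nat.factorial_succ, hchoose, hnext]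
  field_simp
  simp only [a]
  push_cast
  ring

theorem coeff_top_identity (m k : ℕ) :
    (2 * (k : ℚ) + 1) / (2 * m + 2) * coeff (m + 1) (k + m + 1) (m + 1)
      = coeff m (k + m + 1) m - 2 * coeff m (k + m + 2) m := by
  have h := coeff_succ_identity m k m le_rfl 0
  rw [coeff_succ_self] at h
  have hne : ((k : ℚ) + m + 2) ^ 2 ≠ 0 := by positivity
  refine mul_left_cancel₀ hne ?_
  linear_combination -h

section Terms

variable (m k : ℕ) (x y : ℚ)

noncomputable def lhsTerm (v : ℕ) : ℚ :=
  coeff (m + 1) (k + v) v * xFactor x (m + k + 1 + v) * yFactor y (k + v) (m + k + 1)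

/- By `xFactor_succ`, the `u`-th summand of the right-hand side splits into a multiple of
`xFactor x (m + k + 1 + u)` (`rhsTerm₀`) and one of the next `xFactor` (`rhsTerm₁`). -/
noncomputable def rhsTerm₀ (u : ℕ) : ℚ :=
  coeff m (k + u + 1) u
    * (y ^ 2 + ((m : ℚ) + k + u + 2) ^ 2 - ((m : ℚ) + k + 2) ^ 2 - ((k : ℚ) + 1) ^ 2)
    * xFactor x (m + k + 1 + u) * yFactor y (k + u + 1) (m + k + 1)

noncomputable def rhsTerm₁ (u : ℕ) : ℚ :=
  (coeff m (k + u + 1) u * yFactor y (k + u + 1) (m + k + 1)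
    - 2 * coeff m (k + u + 2) u * yFactor y (k + u + 2) (m + k + 2)) * xFactor x (m + k + u + 2)

theorem f2_eq_sum_lhsTerm : f2 k (m + 1) x y = ∑ v ∈ range (m + 2), lhsTerm m k x y v := by
  rw [f2_eq_sum]
  refine sum_congr rfl fun v _ => ?_
  rw [lhsTerm, show m + 1 + k + v = m + k + 1 + v by omega, show m + 1 + k = m + k + 1 by omega]

theorem rhs_eq_sum :
    (x ^ 2 + y ^ 2 - ((k : ℚ) + m + 2) ^ 2 - ((k : ℚ) + 1) ^ 2) * f2 (k + 1) m x y
        - 2 * f2 (k + 2) m x y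
      = ∑ u ∈ range (m + 1), (rhsTerm₀ m k x y u + rhsTerm₁ m k x y u) := by
  rw [f2_eq_sum, f2_eq_sum, mul_sum, mul_sum, ← sum_sub_distrib]
  refine sum_congr rfl fun u _ => ?_
  rw [rhsTerm₀, rhsTerm₁, show m + k + u + 2 = m + k + 1 + u + 1 by omega, xFactor_succ,
    show m + (k + 1) + u = m + k + 1 + u by omega,
    show m + (k + 2) + u = m + k + 1 + u + 1 by omega, xFactor_succ,
    show k + 1 + u = k + u + 1 by omega, show k + 2 + u = k + u + 2 by omega,
    show m + (k + 1) = m + k + 1 by omega, show m + (k + 2) = m + k + 2 by omega]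
  push_cast
  ring

theorem lhsTerm_zero :
    (2 * (k : ℚ) + 1) / (2 * m + 2) * lhsTerm m k x y 0 = rhsTerm₀ m k x y 0 := by
  simp only [lhsTerm, rhsTerm₀, add_zero, Nat.cast_zero]
  rw [yFactor_of_lt y (show k < m + k + 1 by omega)]
  linear_combination (xFactor x (m + k + 1) * (y ^ 2 - ((k : ℚ) + 1) ^ 2)
    * yFactor y (k + 1) (m + k + 1)) * coeff_zero_identity m k

theorem lhsTerm_succ {u : ℕ} (hu : u < m + 1) :
    (2 * (k : ℚ) + 1) / (2 * m + 2) * lhsTerm m k x y (u + 1)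
      = rhsTerm₀ m k x y (u + 1) + rhsTerm₁ m k x y u := by
  rw [lhsTerm, rhsTerm₀, rhsTerm₁, show k + (u + 1) = k + u + 1 by omega,
    show m + k + 1 + (u + 1) = m + k + u + 2 by omega]
  rcases Nat.lt_succ_iff_lt_or_eq.1 hu with hu | hu
  · rw [yFactor_of_lt y (show k + u + 1 < m + k + 1 by omega),
      show m + k + 2 = m + k + 1 + 1 from rfl,
      yFactor_succ_right y (show k + u + 1 + 1 ≤ m + k + 1 by omega)]
    push_cast
    linear_combination (xFactor x (m + k + u + 2) * yFactor y (k + u + 2) (m + k + 1))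
      * coeff_succ_identity m k u hu.le y
  · rw [hu, coeff_succ_self, show m + k + 1 = k + m + 1 by omega,
      show m + k + 2 = k + m + 2 by omega, yFactor_self, yFactor_self]
    linear_combination xFactor x (m + k + m + 2) * coeff_top_identity m k

theorem rhsTerm₀_top : rhsTerm₀ m k x y (m + 1) = 0 := by
  rw [rhsTerm₀, coeff_succ_self]
  ring

end Terms

theorem f2_recurrence (k m : ℕ) (x y : ℚ) :
    (2 * (k : ℚ) + 1) / (2 * m + 2) * f2 k (m + 1) x y
      = (x ^ 2 + y ^ 2 - ((k : ℚ) + m + 2) ^ 2 - ((k : ℚ) + 1) ^ 2) * f2 (k + 1) m x y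
        - 2 * f2 (k + 2) m x y := by
  rw [f2_eq_sum_lhsTerm, mul_sum, rhs_eq_sum]
  exact sum_range_succ_eq_of_shift (lhsTerm_zero m k x y) (fun u hu => lhsTerm_succ m k x y hu)
    (rhsTerm₀_top m k x y)

theorem stmt3 (i m : ℕ) (hi : 1 ≤ i) (x y : ℚ) :
    (2*(i:ℚ) - 1) / (2*(m:ℚ) + 2) * f2 (i-1) (m+1) x y =
      (x^2 + y^2 - ((i:ℚ) + m + 1)^2 - (i:ℚ)^2) * f2 i m x y - 2 * f2 (i+1) m x y := by
  obtain ⟨k, rfl⟩ := Nat.exists_eq_add_of_le' hi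
  rw [Nat.add_sub_cancel]
  push_cast
  linear_combination f2_recurrence k m x y
end

section
/- For nonnegative integers i, m and every integer k with 0 ≤ k < m, the deformed polynomial vanishes at (x,y) = (−1/2−k, k−m+1/2): F~_i^m(−1/2−k, k−m+1/2) = 0. -/
open Polynomial Finset

section Pochhammer

variable {R : Type*} [CommRing R]

theorem ascPochhammer_add_eval (a : R) (p q : ℕ) :
    (ascPochhammer R (p + q)).eval a =
      (ascPochhammer R p).eval a * (ascPochhammer R q).eval (a + p) := by
  rw [← ascPochhammer_mul, eval_mul, eval_comp, eval_add, eval_X, eval_natCast]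

theorem ascPochhammer_succ_eval_left (a : R) (n : ℕ) :
    (ascPochhammer R (n + 1)).eval a = a * (ascPochhammer R n).eval (a + 1) := by
  rw [add_comm, ascPochhammer_add_eval, ascPochhammer_one, eval_X, Nat.cast_one]

theorem ff_eq_descPochhammer_eval (a : R) (n : ℕ) : ff a n = (descPochhammer R n).eval a :=
  (descPochhammer_eval_eq_prod_range n a).symm

theorem ff_eq_ascPochhammer_eval (a : R) (n : ℕ) :
    ff a n = (ascPochhammer R n).eval (a - n + 1) := by
  rw [ff_eq_descPochhammer_eval, descPochhammer_eval_eq_ascPochhammer]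

theorem ff_eq_neg_one_pow_mul_ascPochhammer_eval_neg (a : R) (n : ℕ) :
    ff a n = (-1) ^ n * (ascPochhammer R n).eval (-a) := by
  rw [ascPochhammer_eval_neg_eq_descPochhammer, ← mul_assoc, ← mul_pow, neg_one_mul, neg_neg,
    one_pow, one_mul, ff_eq_descPochhammer_eval]

theorem ff_add (a : R) (p q : ℕ) : ff a (p + q) = ff a p * ff (a - p) q := by
  simp only [ff_eq_descPochhammer_eval, ← descPochhammer_mul, eval_mul, eval_comp, eval_sub,
    eval_X, eval_natCast]

theorem ff_natCast_sub (a : R) (N M : ℕ) :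
    ff ((N : R) - a) (N + M) =
      (-1) ^ M * (ascPochhammer R N).eval (1 - a) * (ascPochhammer R M).eval a := by
  rw [ff_add, ff_eq_ascPochhammer_eval, ff_eq_neg_one_pow_mul_ascPochhammer_eval_neg]
  ring_nf

end Pochhammer

section

variable {R : Type*} [CommRing R]

/-- Term `u` of the Pfaff–Saalschütz sum `₃F₂(-m, a, b; c, 1 + a + b - c - m; 1)`, multiplied by
`(c)_m (1 + a + b - c - m)_m` so that no denominators remain. -/
noncomputable def saalschutzTerm (a b c : R) (m u : ℕ) : R :=
  (-1) ^ u * m.choose u * (ascPochhammer R u).eval a * (ascPochhammer R u).eval b *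
    (ascPochhammer R (m - u)).eval (c + u) * (ascPochhammer R (m - u)).eval (1 + a + b - c - m + u)

/-- The WZ certificate of Zeilberger's recurrence for `∑ u, saalschutzTerm a b c m u`. -/
noncomputable def saalschutzCert (a b c : R) (m u : ℕ) : R :=
  (-1) ^ (u + 1) * (m + 1).choose u * u * (u + c - 1) * (u + (1 + a + b - c - m) - 1) *
    (ascPochhammer R u).eval a * (ascPochhammer R u).eval b *
    (ascPochhammer R (m - u)).eval (c + u) * (ascPochhammer R (m - u)).eval (1 + a + b - c - m + u)

theorem saalschutzCert_zero (a b c : R) (m : ℕ) : saalschutzCert a b c m 0 = 0 := by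
  simp [saalschutzCert]

theorem saalschutz_boundary (a b c : R) (m : ℕ) :
    saalschutzCert a b c m m + (m + 1) * ((c - a + m) * (c - b + m)) * saalschutzTerm a b c m m
      + (m + 1) * saalschutzTerm a b c (m + 1) m
      + (m + 1) * saalschutzTerm a b c (m + 1) (m + 1) = 0 := by
  simp only [saalschutzTerm, saalschutzCert, Nat.sub_self, Nat.add_sub_cancel_left,
    Nat.choose_self, Nat.choose_succ_self_right, ascPochhammer_zero, ascPochhammer_one,
    ascPochhammer_succ_eval, eval_one, eval_X]
  push_cast
  ring

end

section

variable {K : Type*} [Field K] [CharZero K]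

theorem saalschutzCert_succ_sub (a b c : K) {m u : ℕ} (hu : u < m) :
    (m + 1) * saalschutzTerm a b c (m + 1) u
        + (m + 1) * ((c - a + m) * (c - b + m)) * saalschutzTerm a b c m u
      = saalschutzCert a b c m (u + 1) - saalschutzCert a b c m u := by
  obtain ⟨w, rfl⟩ : ∃ w, m = u + w + 1 := ⟨m - u - 1, by omega⟩
  simp only [saalschutzTerm, saalschutzCert, show u + w + 1 + 1 - u = w + 1 + 1 by omega,
    show u + w + 1 - u = w + 1 by omega, show u + w + 1 - (u + 1) = w by omega]
  -- Express every Pochhammer symbol through `(γ + 1)_w`, `(δ + 1)_w`, `(a)_u` and `(b)_u`.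
  obtain ⟨γ, hγ⟩ : ∃ γ : K, γ = c + u := ⟨_, rfl⟩
  obtain ⟨δ, hδ⟩ : ∃ δ : K, δ = 1 + a + b - c - ((u + w + 1 : ℕ) : K) + u := ⟨_, rfl⟩
  rw [← hγ, ← hδ,
    show 1 + a + b - c - ((u + w + 1 + 1 : ℕ) : K) + u = δ - 1 by rw [hδ]; push_cast; ring,
    show c + ((u + 1 : ℕ) : K) = γ + 1 by rw [hγ]; push_cast; ring,
    show 1 + a + b - c - ((u + w + 1 : ℕ) : K) + ((u + 1 : ℕ) : K) = δ + 1 by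
      rw [hδ]; push_cast; ring,
    ascPochhammer_succ_eval_left γ (w + 1), ascPochhammer_succ_eval w (γ + 1),
    ascPochhammer_succ_eval_left (δ - 1) (w + 1), sub_add_cancel,
    ascPochhammer_succ_eval_left γ w, ascPochhammer_succ_eval_left δ w,
    ascPochhammer_succ_eval u a, ascPochhammer_succ_eval u b]
  generalize (ascPochhammer K w).eval (γ + 1) = P
  generalize (ascPochhammer K w).eval (δ + 1) = Q
  generalize (ascPochhammer K u).eval a = A
  generalize (ascPochhammer K u).eval b = B
  subst hγ hδ
  rw [show u + w + 1 + 1 = u + (w + 2) by ring, Nat.cast_add_choose,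
    show u + (w + 2) = (u + 1) + (w + 1) by ring, Nat.cast_add_choose,
    show u + w + 1 = u + (w + 1) by ring, Nat.cast_add_choose,
    show u + 1 + (w + 1) = (u + (w + 1)) + 1 by ring]
  simp only [Nat.factorial_succ]
  push_cast
  have hU : (u.factorial : K) ≠ 0 := Nat.cast_ne_zero.mpr u.factorial_ne_zero
  have hW : (w.factorial : K) ≠ 0 := Nat.cast_ne_zero.mpr w.factorial_ne_zero
  have hu1 : (u : K) + 1 ≠ 0 := Nat.cast_add_one_ne_zero u
  have hw1 : (w : K) + 1 ≠ 0 := Nat.cast_add_one_ne_zero w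
  have hw2 : (w : K) + 1 + 1 ≠ 0 := by norm_cast
  rw [pow_succ, pow_succ]
  field_simp
  ring

theorem sum_saalschutzTerm_succ (a b c : K) (m : ℕ) :
    ∑ u ∈ range (m + 2), saalschutzTerm a b c (m + 1) u =
      -((c - a + m) * (c - b + m)) * ∑ u ∈ range (m + 1), saalschutzTerm a b c m u := by
  have htel : ∑ u ∈ range m, ((m + 1) * saalschutzTerm a b c (m + 1) u
      + (m + 1) * ((c - a + m) * (c - b + m)) * saalschutzTerm a b c m u)
      = saalschutzCert a b c m m := by
    rw [sum_congr rfl fun u hu => saalschutzCert_succ_sub a b c (mem_range.mp hu),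
      sum_range_sub (saalschutzCert a b c m), saalschutzCert_zero, sub_zero]
  rw [sum_add_distrib, ← mul_sum, ← mul_sum] at htel
  apply mul_left_cancel₀ (Nat.cast_add_one_ne_zero m : (m : K) + 1 ≠ 0)
  rw [sum_range_succ, sum_range_succ, sum_range_succ]
  linear_combination htel + saalschutz_boundary a b c m

theorem sum_saalschutzTerm (a b c : K) (m : ℕ) :
    ∑ u ∈ range (m + 1), saalschutzTerm a b c m u =
      (-1) ^ m * (ascPochhammer K m).eval (c - a) * (ascPochhammer K m).eval (c - b) := by
  induction m with
  | zero => simp [saalschutzTerm]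
  | succ m ih =>
    rw [sum_saalschutzTerm_succ, ih, ascPochhammer_succ_eval, ascPochhammer_succ_eval]
    ring

end

theorem ascPochhammer_eval_two_mul_add_one_split (i m u : ℕ) (hu : u ≤ m) :
    (ascPochhammer ℚ (2 * m + 1)).eval ((i : ℚ) + 1 / 2) =
      (ascPochhammer ℚ u).eval ((i : ℚ) + 1 / 2) * ff ((m : ℚ) + i + u + 1 / 2) (m + 1)
        * (ascPochhammer ℚ (m - u)).eval (((m + i : ℕ) : ℚ) + 3 / 2 + u) := by
  obtain ⟨v, rfl⟩ : ∃ v, m = u + v := ⟨m - u, by omega⟩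
  rw [show 2 * (u + v) + 1 = u + (u + v + 1) + v by ring, ascPochhammer_add_eval,
    ascPochhammer_add_eval, ff_eq_ascPochhammer_eval, Nat.add_sub_cancel_left]
  push_cast
  ring_nf

theorem ff_mul_ff_eq_ascPochhammer (i m k u : ℕ) (hk : k ≤ m + i + u) (hu : u ≤ m) :
    ff ((-1 / 2 - (k : ℚ)) + m + i + u) (2 * m + 2 * i + 2 * u + 1)
        * ff (((k : ℚ) - m + 1 / 2) - i - u - 1) (m - u) =
      (-1) ^ (i + k + 1) * (ascPochhammer ℚ (2 * m + i - k)).eval (1 / 2)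
        * ((ascPochhammer ℚ (m + i + k + 1)).eval (1 / 2)
          * (ascPochhammer ℚ u).eval (((m + i + k : ℕ) : ℚ) + 3 / 2)) := by
  obtain ⟨N, hN⟩ : ∃ N, m + i + u = k + N := ⟨m + i + u - k, by omega⟩
  have hNq : (m : ℚ) + i + u = k + N := by exact_mod_cast hN
  have hx : ff ((-1 / 2 - (k : ℚ)) + m + i + u) (2 * m + 2 * i + 2 * u + 1) =
      (-1) ^ (m + i + k + 1 + u) * (ascPochhammer ℚ N).eval (1 / 2)
        * ((ascPochhammer ℚ (m + i + k + 1)).eval (1 / 2)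
          * (ascPochhammer ℚ u).eval (((m + i + k : ℕ) : ℚ) + 3 / 2)) := by
    rw [show 2 * m + 2 * i + 2 * u + 1 = N + (m + i + k + 1 + u) by omega,
      show (-1 / 2 - (k : ℚ)) + m + i + u = N - 1 / 2 by linarith,
      ff_natCast_sub, ascPochhammer_add_eval (1 / 2 : ℚ) (m + i + k + 1)]
    push_cast
    ring_nf
  have hy : ff (((k : ℚ) - m + 1 / 2) - i - u - 1) (m - u) =
      (-1) ^ (m - u) * (ascPochhammer ℚ (m - u)).eval ((N : ℚ) + 1 / 2) := by
    rw [ff_eq_neg_one_pow_mul_ascPochhammer_eval_neg]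
    congr 2
    linarith
  have hsign : (-1 : ℚ) ^ (m + i + k + 1 + u) * (-1) ^ (m - u) = (-1) ^ (i + k + 1) := by
    rw [← pow_add]
    exact neg_one_pow_congr (by
      rw [show m + i + k + 1 + u + (m - u) = 2 * m + (i + k + 1) by omega]; simp [Nat.even_add])
  rw [hx, hy, show 2 * m + i - k = N + (m - u) by omega, ascPochhammer_add_eval (1 / 2 : ℚ) N,
    add_comm (1 / 2 : ℚ), ← hsign]
  ring

theorem f2_summand_eq (i m k u : ℕ) (hk : k ≤ m + i + u) (hu : u ≤ m) :
    (m.choose u : ℚ) * (-1) ^ u * (m.factorial : ℚ) / ff ((m : ℚ) + i + u + 1 / 2) (m + 1)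
        * ff ((-1 / 2 - (k : ℚ)) + m + i + u) (2 * m + 2 * i + 2 * u + 1)
        * ff (((k : ℚ) - m + 1 / 2) + m + i) (m - u)
        * ff (((k : ℚ) - m + 1 / 2) - i - u - 1) (m - u) =
      (-1) ^ (i + k + 1) * m.factorial * (ascPochhammer ℚ (m + i + k + 1)).eval (1 / 2)
          * (ascPochhammer ℚ (2 * m + i - k)).eval (1 / 2)
          / (ascPochhammer ℚ (2 * m + 1)).eval ((i : ℚ) + 1 / 2)
        * saalschutzTerm ((i : ℚ) + 1 / 2) ((m + i + k : ℕ) + 3 / 2) ((m + i : ℕ) + 3 / 2) m u := by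
  have hy : ff (((k : ℚ) - m + 1 / 2) + m + i) (m - u) =
      (ascPochhammer ℚ (m - u)).eval (1 + ((i : ℚ) + 1 / 2) + (((m + i + k : ℕ) : ℚ) + 3 / 2)
        - (((m + i : ℕ) : ℚ) + 3 / 2) - m + u) := by
    rw [ff_eq_ascPochhammer_eval, Nat.cast_sub hu]
    push_cast
    ring_nf
  have ha : (ascPochhammer ℚ u).eval ((i : ℚ) + 1 / 2) ≠ 0 :=
    (ascPochhammer_pos _ _ (by positivity)).ne'
  have hc : (ascPochhammer ℚ (m - u)).eval (((m + i : ℕ) : ℚ) + 3 / 2 + u) ≠ 0 :=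
    (ascPochhammer_pos _ _ (by positivity)).ne'
  have hf : ff ((m : ℚ) + i + u + 1 / 2) (m + 1) ≠ 0 := by
    rw [ff_eq_ascPochhammer_eval]
    exact (ascPochhammer_pos _ _ (by push_cast; ring_nf; positivity)).ne'
  rw [mul_right_comm (_ * ff _ (2 * m + 2 * i + 2 * u + 1)), mul_assoc (_ / _),
    ff_mul_ff_eq_ascPochhammer i m k u hk hu, hy, ascPochhammer_eval_two_mul_add_one_split i m u hu]
  simp only [saalschutzTerm, div_mul_eq_mul_div]
  rw [div_eq_div_iff hf (mul_ne_zero (mul_ne_zero ha hf) hc)]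
  ring

theorem stmt6 (i m k : ℕ) (hk : k < m) :
    Ft i m (-1/2 - (k:ℚ)) ((k:ℚ) - m + 1/2) = 0 := by
  rw [Ft, f2, sum_congr rfl fun u hu =>
    f2_summand_eq i m k u (by omega) (Nat.lt_succ_iff.mp (mem_range.mp hu)), ← mul_sum,
    sum_saalschutzTerm,
    show ((m + i : ℕ) : ℚ) + 3 / 2 - (((m + i + k : ℕ) : ℚ) + 3 / 2) = -k by push_cast; ring,
    ascPochhammer_eval_neg_coe_nat_of_lt hk]
  simp
end
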